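/- arXiv:1308.2069 — 6 statements merged into one kernel-verified Lean document; each statement's English description precedes it below -/
import Mathlib

section
/- Every finite abelian group satisfies the Ingleton inequality: if A is a finite abelian group and A₁, A₂, A₃, A₄ are subgroups of A, then |A₁|·|A₂|·|A₃∩A₄|·|A₁∩A₂∩A₃|·|A₁∩A₂∩A₄| ≥ |A₁∩A₂|·|A₁∩A₃|·|A₁∩A₄|·|A₂∩A₃|·|A₂∩A₄|. -/
set_option linter.unusedSectionVars false

lemma ingleton_card_sup_mul_card_inf {A : Type*} [CommGroup A] [Finite A] (H K : Subgroup A) :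
    Nat.card (H ⊔ K : Subgroup A) * Nat.card (H ⊓ K : Subgroup A) =
      Nat.card H * Nat.card K := by
  have e := QuotientGroup.quotientInfEquivProdNormalQuotient H K
  have h1 : Nat.card H = Nat.card (H ⧸ K.subgroupOf H) * Nat.card (K.subgroupOf H) :=
    Subgroup.card_eq_card_quotient_mul_card_subgroup _
  have h2 : Nat.card (H ⊔ K : Subgroup A) =
      Nat.card ((H ⊔ K : Subgroup A) ⧸ K.subgroupOf (H ⊔ K)) *
        Nat.card (K.subgroupOf (H ⊔ K)) :=
    Subgroup.card_eq_card_quotient_mul_card_subgroup _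
  have hq : Nat.card (H ⧸ K.subgroupOf H) =
      Nat.card ((H ⊔ K : Subgroup A) ⧸ K.subgroupOf (H ⊔ K)) := Nat.card_congr e.toEquiv
  have hk : Nat.card (K.subgroupOf (H ⊔ K)) = Nat.card K :=
    Nat.card_congr (Subgroup.subgroupOfEquivOfLe le_sup_right).toEquiv
  have hi : Nat.card (K.subgroupOf H) = Nat.card (H ⊓ K : Subgroup A) := by
    rw [← Subgroup.inf_subgroupOf_left]
    exact Nat.card_congr (Subgroup.subgroupOfEquivOfLe inf_le_left).toEquiv
  rw [h2, hk, ← hq, h1, hi]; ring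

lemma ingleton_key_ineq {A : Type*} [CommGroup A] [Finite A] (H K L : Subgroup A) :
    Nat.card (H ⊓ L : Subgroup A) * Nat.card (K ⊓ L : Subgroup A) ≤
      Nat.card (H ⊓ K ⊓ L : Subgroup A) * Nat.card ((H ⊔ K) ⊓ L : Subgroup A) := by
  rw [← ingleton_card_sup_mul_card_inf (H ⊓ L) (K ⊓ L)]
  have hinf : (H ⊓ L) ⊓ (K ⊓ L) = H ⊓ K ⊓ L := by
    rw [inf_inf_inf_comm, inf_idem]
  rw [hinf, mul_comm]
  exact Nat.mul_le_mul_left _ (Subgroup.card_le_of_le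
    (sup_le (inf_le_inf_right _ le_sup_left) (inf_le_inf_right _ le_sup_right)))

lemma ingleton_nat_combine {c12 c13 c14 c23 c24 c123 c124 c34 a1 a2 b x3 x4 y z : ℕ}
    (h1 : c13 * c23 ≤ c123 * x3) (h2 : c14 * c24 ≤ c124 * x4) (h3 : x3 * x4 ≤ y * z)
    (h4 : y ≤ c34) (h5 : z ≤ b) (h6 : b * c12 = a1 * a2) :
    c12 * c13 * c14 * c23 * c24 ≤ a1 * a2 * c34 * c123 * c124 := by
  calc c12 * c13 * c14 * c23 * c24
      = (c13 * c23) * ((c14 * c24) * c12) := by ring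
    _ ≤ (c123 * x3) * ((c124 * x4) * c12) :=
        Nat.mul_le_mul h1 (Nat.mul_le_mul h2 le_rfl)
    _ = (x3 * x4) * (c12 * (c123 * c124)) := by ring
    _ ≤ (y * z) * (c12 * (c123 * c124)) := Nat.mul_le_mul h3 le_rfl
    _ ≤ (c34 * b) * (c12 * (c123 * c124)) :=
        Nat.mul_le_mul (Nat.mul_le_mul h4 h5) le_rfl
    _ = (b * c12) * (c34 * (c123 * c124)) := by ring
    _ = (a1 * a2) * (c34 * (c123 * c124)) := by rw [h6]
    _ = a1 * a2 * c34 * c123 * c124 := by ring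

/-- Every finite abelian group satisfies the Ingleton inequality. -/
theorem abelian_ingleton
    (A : Type*) [CommGroup A] [Finite A]
    (A₁ A₂ A₃ A₄ : Subgroup A) :
    Nat.card (A₁ ⊓ A₂ : Subgroup A) * Nat.card (A₁ ⊓ A₃ : Subgroup A) *
      Nat.card (A₁ ⊓ A₄ : Subgroup A) * Nat.card (A₂ ⊓ A₃ : Subgroup A) *
      Nat.card (A₂ ⊓ A₄ : Subgroup A) ≤
    Nat.card A₁ * Nat.card A₂ * Nat.card (A₃ ⊓ A₄ : Subgroup A) *
      Nat.card (A₁ ⊓ A₂ ⊓ A₃ : Subgroup A) * Nat.card (A₁ ⊓ A₂ ⊓ A₄ : Subgroup A) := by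
  have h1 := ingleton_key_ineq A₁ A₂ A₃
  have h2 := ingleton_key_ineq A₁ A₂ A₄
  have h3 := ingleton_key_ineq A₃ A₄ (A₁ ⊔ A₂)
  have e3 : Nat.card (A₃ ⊓ (A₁ ⊔ A₂) : Subgroup A) =
      Nat.card ((A₁ ⊔ A₂) ⊓ A₃ : Subgroup A) := by rw [inf_comm]
  have e4 : Nat.card (A₄ ⊓ (A₁ ⊔ A₂) : Subgroup A) =
      Nat.card ((A₁ ⊔ A₂) ⊓ A₄ : Subgroup A) := by rw [inf_comm]
  rw [e3, e4] at h3
  have h4 : Nat.card (A₃ ⊓ A₄ ⊓ (A₁ ⊔ A₂) : Subgroup A) ≤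
      Nat.card (A₃ ⊓ A₄ : Subgroup A) := Subgroup.card_le_of_le inf_le_left
  have h5 : Nat.card ((A₃ ⊔ A₄) ⊓ (A₁ ⊔ A₂) : Subgroup A) ≤
      Nat.card (A₁ ⊔ A₂ : Subgroup A) := Subgroup.card_le_of_le inf_le_right
  have h6 := ingleton_card_sup_mul_card_inf A₁ A₂
  exact ingleton_nat_combine h1 h2 h3 h4 h5 h6
end

section
/- Let G be a finite nilpotent group. If for every prime p dividing |G| every Sylow p-subgroup of G satisfies the Ingleton inequality (as a group, with respect to all quadruples of its subgroups), then G satisfies the Ingleton inequality. -/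
/-- A group satisfies the Ingleton inequality if for any four subgroups
`H₁, H₂, H₃, H₄` one has
`|H₁∩H₂|·|H₁∩H₃|·|H₁∩H₄|·|H₂∩H₃|·|H₂∩H₄| ≤ |H₁|·|H₂|·|H₃∩H₄|·|H₁∩H₂∩H₃|·|H₁∩H₂∩H₄|`. -/
def SatisfiesIngleton (G : Type*) [Group G] : Prop :=
  ∀ H₁ H₂ H₃ H₄ : Subgroup G,
    Nat.card (H₁ ⊓ H₂ : Subgroup G) * Nat.card (H₁ ⊓ H₃ : Subgroup G) *
      Nat.card (H₁ ⊓ H₄ : Subgroup G) * Nat.card (H₂ ⊓ H₃ : Subgroup G) *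
      Nat.card (H₂ ⊓ H₄ : Subgroup G) ≤
    Nat.card H₁ * Nat.card H₂ * Nat.card (H₃ ⊓ H₄ : Subgroup G) *
      Nat.card (H₁ ⊓ H₂ ⊓ H₃ : Subgroup G) * Nat.card (H₁ ⊓ H₂ ⊓ H₄ : Subgroup G)


/-!
In a finite nilpotent group every Sylow `p`-subgroup `P` is normal, so for every subgroup `H`
the intersection `H ∩ P` is a Sylow `p`-subgroup of `H` and `|H ∩ P|` is the `p`-part of `|H|`.
Intersecting four subgroups of `G` with `P` therefore turns the Ingleton inequality in `P` into
the `p`-part of the Ingleton inequality in `G`. Both sides being positive, these inequalities for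
all primes `p` show that the left side divides the right side.
-/

section IngletonInequality

variable {α β : Type*} [SemilatticeInf α] [SemilatticeInf β]

def IngletonInequality (μ : α → ℕ) : Prop :=
  ∀ a₁ a₂ a₃ a₄ : α,
    μ (a₁ ⊓ a₂) * μ (a₁ ⊓ a₃) * μ (a₁ ⊓ a₄) * μ (a₂ ⊓ a₃) * μ (a₂ ⊓ a₄) ≤
      μ a₁ * μ a₂ * μ (a₃ ⊓ a₄) * μ (a₁ ⊓ a₂ ⊓ a₃) * μ (a₁ ⊓ a₂ ⊓ a₄)

theorem satisfiesIngleton_iff (G : Type*) [Group G] :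
    SatisfiesIngleton G ↔ IngletonInequality fun H : Subgroup G ↦ Nat.card H :=
  Iff.rfl

theorem IngletonInequality.comp {μ : β → ℕ} (h : IngletonInequality μ) {f : α → β}
    (hf : ∀ a b, f (a ⊓ b) = f a ⊓ f b) : IngletonInequality (μ ∘ f) := by
  intro a₁ a₂ a₃ a₄
  simpa only [Function.comp_apply, hf] using h (f a₁) (f a₂) (f a₃) (f a₄)

theorem Nat.le_of_forall_prime_ordProj_le {a b : ℕ} (ha : a ≠ 0) (hb : b ≠ 0)
    (h : ∀ p, p.Prime → ordProj[p] a ≤ ordProj[p] b) : a ≤ b :=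
  Nat.le_of_dvd (Nat.pos_of_ne_zero hb) <| (Nat.factorization_prime_le_iff_dvd ha hb).mp
    fun p hp ↦ (Nat.pow_le_pow_iff_right hp.one_lt).mp (h p hp)

theorem IngletonInequality.of_forall_prime_ordProj {μ : α → ℕ} (hμ : ∀ a, μ a ≠ 0)
    (h : ∀ p, p.Prime → IngletonInequality fun a ↦ ordProj[p] (μ a)) :
    IngletonInequality μ := by
  intro a₁ a₂ a₃ a₄
  refine Nat.le_of_forall_prime_ordProj_le ?_ ?_ fun p hp ↦ ?_
  · simp [hμ]
  · simp [hμ]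
  · simpa (disch := simp [hμ]) only [Nat.ordProj_mul] using h p hp a₁ a₂ a₃ a₄

end IngletonInequality

theorem satisfiesIngleton_of_subsingleton (G : Type*) [Group G] [Subsingleton G] :
    SatisfiesIngleton G := by
  intro H₁ H₂ H₃ H₄
  simp [Nat.card_unique]

theorem Subgroup.card_subgroupOf {G : Type*} [Group G] (H K : Subgroup G) :
    Nat.card (H.subgroupOf K) = Nat.card (H ⊓ K : Subgroup G) := by
  rw [← inf_subgroupOf_right]
  exact Nat.card_congr (subgroupOfEquivOfLe inf_le_right).toEquiv

theorem SatisfiesIngleton.comp_subgroupOf {G : Type*} [Group G] {K : Subgroup G}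
    (hK : SatisfiesIngleton K) :
    IngletonInequality fun H : Subgroup G ↦ Nat.card (H.subgroupOf K) :=
  ((satisfiesIngleton_iff K).mp hK).comp fun a b ↦ Subgroup.comap_inf a b K.subtype

namespace Sylow

variable {G : Type*} [Group G] {p : ℕ}

theorem _root_.IsPGroup.le_sylow_of_sylow_normal {K : Subgroup G} (hK : IsPGroup p K)
    (P : Sylow p G) [P.Normal] : K ≤ P :=
  sup_eq_right.mp (P.is_maximal' (hK.to_sup_of_normal_right P.isPGroup') le_sup_right)

def subgroupOf (P : Sylow p G) [P.Normal] (H : Subgroup G) : Sylow p H where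
  toSubgroup := (P : Subgroup G).subgroupOf H
  isPGroup' := P.isPGroup'.comap_of_injective H.subtype H.subtype_injective
  is_maximal' hQ hPQ := le_antisymm
    (Subgroup.map_le_iff_le_comap.mp ((hQ.map H.subtype).le_sylow_of_sylow_normal P)) hPQ

variable [Finite G] [Fact p.Prime]

theorem card_subgroupOf_of_normal (P : Sylow p G) [P.Normal] (H : Subgroup G) :
    Nat.card (H.subgroupOf P) = ordProj[p] (Nat.card H) := by
  rw [Subgroup.card_subgroupOf, inf_comm, ← Subgroup.card_subgroupOf,
    ← (P.subgroupOf H).card_eq_multiplicity]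
  rfl

theorem subsingleton_of_not_dvd_card (P : Sylow p G) (hp : ¬p ∣ Nat.card G) :
    Subsingleton P := by
  have hP : Nat.card P = 1 := by
    rw [P.card_eq_multiplicity, Nat.factorization_eq_zero_of_not_dvd hp, pow_zero]
  exact (Nat.card_eq_one_iff_unique.mp hP).1

end Sylow

/-- If every Sylow `p`-subgroup of a finite nilpotent group `G`
(for every prime `p` dividing `|G|`) satisfies the Ingleton inequality,
then `G` satisfies the Ingleton inequality. -/
theorem nilpotent_ingleton_of_sylow_ingleton
    (G : Type*) [Group G] [Finite G] [Group.IsNilpotent G]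
    (hSyl : ∀ p : ℕ, p.Prime → p ∣ Nat.card G →
      ∀ P : Sylow p G, SatisfiesIngleton (P : Subgroup G)) :
    SatisfiesIngleton G := by
  rw [satisfiesIngleton_iff]
  refine .of_forall_prime_ordProj (fun H ↦ Nat.card_pos.ne') fun p hp ↦ ?_
  have := Fact.mk hp
  let P : Sylow p G := default
  have hP : SatisfiesIngleton (P : Subgroup G) := by
    by_cases hpG : p ∣ Nat.card G
    · exact hSyl p hp hpG P
    · have := P.subsingleton_of_not_dvd_card hpG
      exact satisfiesIngleton_of_subsingleton P
  simpa only [P.card_subgroupOf_of_normal] using hP.comp_subgroupOf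
end

section
/- Every finite nilpotent group of nilpotency class at most 2 and of odd order satisfies the Ingleton inequality: for any four subgroups H₁, H₂, H₃, H₄ of such a group G, |H₁|·|H₂|·|H₃∩H₄|·|H₁∩H₂∩H₃|·|H₁∩H₂∩H₄| ≥ |H₁∩H₂|·|H₁∩H₃|·|H₁∩H₄|·|H₂∩H₃|·|H₂∩H₄|. -/
/-!
Baer's trick. In a group of class at most two all commutators are central, and if the order is
odd every element `c` has the square root `c ^ m`, where `2 * m ≡ 1` modulo the order. The product
`x ∘ y = x * y * ⁅y, x⁆ ^ m` is then an abelian group law on the same underlying set, and every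
subgroup of `G` is closed under it. The Ingleton inequality only involves the orders of the
subgroups and of their intersections, so it transfers from the abelian group, where it follows
from `|H ⊔ K| * |H ⊓ K| = |H| * |K|` for `H₁, H₂` and from the inequality
`|H| * |K| ≤ |H ⊔ K| * |H ⊓ K|`, valid in every finite group, for the remaining pairs.
-/

open Subgroup commutatorElement

namespace Subgroup

variable {G : Type*} [Group G]

theorem card_inf_mul_relIndex (H K : Subgroup G) :
    Nat.card ↥(H ⊓ K) * K.relIndex H = Nat.card H := by
  rw [← inf_relIndex_left, ← relIndex_bot_left, ← relIndex_bot_left,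
    relIndex_mul_relIndex ⊥ (H ⊓ K) H bot_le inf_le_left]

theorem card_mul_relIndex_sup (H K : Subgroup G) :
    Nat.card K * K.relIndex (H ⊔ K) = Nat.card ↥(H ⊔ K) := by
  simpa [inf_of_le_right (le_sup_right : K ≤ H ⊔ K)] using card_inf_mul_relIndex (H ⊔ K) K

theorem card_sup_mul_card_inf_of_normal (H K : Subgroup G) [K.Normal] :
    Nat.card ↥(H ⊔ K) * Nat.card ↥(H ⊓ K) = Nat.card H * Nat.card K := by
  rw [← card_inf_mul_relIndex H K, ← card_mul_relIndex_sup, relIndex_sup_right]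
  ring

theorem card_mul_card_le_card_sup_mul_card_inf [Finite G] (H K : Subgroup G) :
    Nat.card H * Nat.card K ≤ Nat.card ↥(H ⊔ K) * Nat.card ↥(H ⊓ K) := by
  rw [← card_inf_mul_relIndex H K, ← card_mul_relIndex_sup]
  have : K.relIndex H ≤ K.relIndex (H ⊔ K) :=
    relIndex_le_of_le_right le_sup_left (K.subgroupOf (H ⊔ K)).index_ne_zero_of_finite
  calc _ ≤ Nat.card ↥(H ⊓ K) * K.relIndex (H ⊔ K) * Nat.card K := by gcongr
    _ = _ := by ring

theorem card_mul_card_le_of_sup_le_of_inf_le [Finite G] {A B X Y : Subgroup G}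
    (hX : A ⊔ B ≤ X) (hY : A ⊓ B ≤ Y) : Nat.card A * Nat.card B ≤ Nat.card X * Nat.card Y :=
  (card_mul_card_le_card_sup_mul_card_inf A B).trans
    (Nat.mul_le_mul (card_le_of_le hX) (card_le_of_le hY))

def IngletonInequality (H₁ H₂ H₃ H₄ : Subgroup G) : Prop :=
  Nat.card ↥(H₁ ⊓ H₂) * Nat.card ↥(H₁ ⊓ H₃) * Nat.card ↥(H₁ ⊓ H₄) * Nat.card ↥(H₂ ⊓ H₃) *
      Nat.card ↥(H₂ ⊓ H₄) ≤
    Nat.card H₁ * Nat.card H₂ * Nat.card ↥(H₃ ⊓ H₄) * Nat.card ↥(H₁ ⊓ H₂ ⊓ H₃) *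
      Nat.card ↥(H₁ ⊓ H₂ ⊓ H₄)

theorem ingletonInequality_of_card_sup_mul_card_inf_le [Finite G] {H₁ H₂ : Subgroup G}
    (h₁₂ : Nat.card ↥(H₁ ⊔ H₂) * Nat.card ↥(H₁ ⊓ H₂) ≤ Nat.card H₁ * Nat.card H₂)
    (H₃ H₄ : Subgroup G) : IngletonInequality H₁ H₂ H₃ H₄ := by
  set S := H₁ ⊔ H₂
  have through_S (K : Subgroup G) :
      Nat.card ↥(H₁ ⊓ K) * Nat.card ↥(H₂ ⊓ K) ≤ Nat.card ↥(S ⊓ K) * Nat.card ↥(H₁ ⊓ H₂ ⊓ K) :=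
    card_mul_card_le_of_sup_le_of_inf_le
      (sup_le (inf_le_inf_right K le_sup_left) (inf_le_inf_right K le_sup_right))
      (by rw [inf_inf_inf_comm, inf_idem])
  have h₃ := through_S H₃
  have h₄ := through_S H₄
  have h₃₄ : Nat.card ↥(S ⊓ H₃) * Nat.card ↥(S ⊓ H₄) ≤ Nat.card S * Nat.card ↥(H₃ ⊓ H₄) :=
    card_mul_card_le_of_sup_le_of_inf_le (sup_le inf_le_left inf_le_left)
      (by rw [inf_inf_inf_comm, inf_idem]; exact inf_le_right)
  unfold IngletonInequality
  calc _ = Nat.card ↥(H₁ ⊓ H₃) * Nat.card ↥(H₂ ⊓ H₃) *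
          (Nat.card ↥(H₁ ⊓ H₄) * Nat.card ↥(H₂ ⊓ H₄)) * Nat.card ↥(H₁ ⊓ H₂) := by ring
    _ ≤ Nat.card ↥(S ⊓ H₃) * Nat.card ↥(H₁ ⊓ H₂ ⊓ H₃) *
          (Nat.card ↥(S ⊓ H₄) * Nat.card ↥(H₁ ⊓ H₂ ⊓ H₄)) * Nat.card ↥(H₁ ⊓ H₂) := by gcongr
    _ = Nat.card ↥(S ⊓ H₃) * Nat.card ↥(S ⊓ H₄) * Nat.card ↥(H₁ ⊓ H₂) *
          (Nat.card ↥(H₁ ⊓ H₂ ⊓ H₃) * Nat.card ↥(H₁ ⊓ H₂ ⊓ H₄)) := by ring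
    _ ≤ Nat.card S * Nat.card ↥(H₃ ⊓ H₄) * Nat.card ↥(H₁ ⊓ H₂) *
          (Nat.card ↥(H₁ ⊓ H₂ ⊓ H₃) * Nat.card ↥(H₁ ⊓ H₂ ⊓ H₄)) := by gcongr
    _ = Nat.card S * Nat.card ↥(H₁ ⊓ H₂) * Nat.card ↥(H₃ ⊓ H₄) *
          (Nat.card ↥(H₁ ⊓ H₂ ⊓ H₃) * Nat.card ↥(H₁ ⊓ H₂ ⊓ H₄)) := by ring
    _ ≤ _ := by rw [← mul_assoc]; gcongr

theorem ingletonInequality_of_commGroup {A : Type*} [CommGroup A] [Finite A]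
    (H₁ H₂ H₃ H₄ : Subgroup A) : IngletonInequality H₁ H₂ H₃ H₄ :=
  ingletonInequality_of_card_sup_mul_card_inf_le (card_sup_mul_card_inf_of_normal H₁ H₂).le H₃ H₄

theorem IngletonInequality.of_image {A : Type*} [Group A] {f : G → A} (hf : f.Injective)
    {K : Subgroup G → Subgroup A} (hK : ∀ H, (K H : Set A) = f '' H) {H₁ H₂ H₃ H₄ : Subgroup G}
    (h : IngletonInequality (K H₁) (K H₂) (K H₃) (K H₄)) : IngletonInequality H₁ H₂ H₃ H₄ := by
  have card_K (H : Subgroup G) : Nat.card (K H) = Nat.card H := by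
    rw [← SetLike.coe_sort_coe, hK, Nat.card_image_of_injective hf]
    rfl
  have inf_K (H H' : Subgroup G) : K H ⊓ K H' = K (H ⊓ H') :=
    SetLike.coe_injective (by simp only [coe_inf, hK, Set.image_inter hf])
  unfold IngletonInequality at h ⊢
  simpa only [inf_K, card_K] using h

end Subgroup

section Baer

variable {G : Type*} [Group G]

theorem commutatorElement_eq_one_of_mem_center_right {z : G} (hz : z ∈ center G) (x : G) :
    ⁅x, z⁆ = 1 :=
  commutatorElement_eq_one_iff_commute.mpr (hz.comm x).symm

theorem commutatorElement_eq_one_of_mem_center_left {z : G} (hz : z ∈ center G) (x : G) :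
    ⁅z, x⁆ = 1 :=
  commutatorElement_eq_one_iff_commute.mpr (hz.comm x)

theorem commutatorElement_mul_right_of_forall_mem_center (hc : ∀ a b : G, ⁅a, b⁆ ∈ center G)
    (x y z : G) : ⁅x, y * z⁆ = ⁅x, y⁆ * ⁅x, z⁆ := by
  rw [commutatorElement_mul_right_eq_mul_conj, mul_assoc _ y, mem_center_iff.mp (hc x z) y,
    ← mul_assoc, mul_inv_cancel_right]

theorem commutatorElement_mul_left_of_forall_mem_center (hc : ∀ a b : G, ⁅a, b⁆ ∈ center G)
    (x y z : G) : ⁅x * y, z⁆ = ⁅x, z⁆ * ⁅y, z⁆ := by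
  rw [← commutatorElement_inv, commutatorElement_mul_right_of_forall_mem_center hc, mul_inv_rev,
    commutatorElement_inv, commutatorElement_inv, mem_center_iff.mp (hc x z)]

/-- With `g ^ (2 * m) = g`, the factor `⁅y, x⁆ ^ m` is a square root of `⁅y, x⁆`. -/
def baerMul (m : ℕ) (x y : G) : G := x * y * ⁅y, x⁆ ^ m

theorem baerMul_assoc (m : ℕ) (hc : ∀ a b : G, ⁅a, b⁆ ∈ center G) (x y z : G) :
    baerMul m (baerMul m x y) z = baerMul m x (baerMul m y z) := by
  have central (a b : G) : ⁅a, b⁆ ^ m ∈ center G := pow_mem (hc a b) m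
  have comm (g a b : G) : g * ⁅a, b⁆ ^ m = ⁅a, b⁆ ^ m * g := mem_center_iff.mp (central a b) g
  have hL : ⁅z, x * y * ⁅y, x⁆ ^ m⁆ = ⁅z, x⁆ * ⁅z, y⁆ := by
    rw [commutatorElement_mul_right_of_forall_mem_center hc,
      commutatorElement_mul_right_of_forall_mem_center hc,
      commutatorElement_eq_one_of_mem_center_right (central y x), mul_one]
  have hR : ⁅y * z * ⁅z, y⁆ ^ m, x⁆ = ⁅y, x⁆ * ⁅z, x⁆ := by
    rw [commutatorElement_mul_left_of_forall_mem_center hc,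
      commutatorElement_mul_left_of_forall_mem_center hc,
      commutatorElement_eq_one_of_mem_center_left (central z y), mul_one]
  rw [baerMul, baerMul, baerMul, baerMul, hL, hR, ((hc z x).comm _).symm.mul_pow,
    ((hc z y).comm _).symm.mul_pow, mul_assoc (x * y), ← comm z, ← mul_assoc]
  simp only [mul_assoc]
  rw [← comm (⁅y, x⁆ ^ m * ⁅z, x⁆ ^ m) z y, mul_assoc]

theorem baerMul_comm (m : ℕ) (hc : ∀ a b : G, ⁅a, b⁆ ∈ center G)
    (hm : ∀ g : G, g ^ (2 * m) = g) (x y : G) : baerMul m x y = baerMul m y x := by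
  have hxy : x * y = y * x * ⁅x, y⁆ := by
    rw [mem_center_iff.mp (hc x y), commutatorElement_def]
    group
  rw [baerMul, baerMul, hxy, mul_assoc (y * x)]
  congr 1
  rw [← commutatorElement_inv x y, inv_pow, mul_inv_eq_iff_eq_mul, ← pow_add, ← two_mul, hm]

def Baer (G : Type*) : Type _ := G

def toBaer : G ≃ Baer G := Equiv.refl G

instance [Finite G] : Finite (Baer G) := inferInstanceAs (Finite G)

abbrev Baer.commGroup (m : ℕ) (hc : ∀ a b : G, ⁅a, b⁆ ∈ center G)
    (hm : ∀ g : G, g ^ (2 * m) = g) : CommGroup (Baer G) where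
  mul x y := toBaer (baerMul m (toBaer.symm x) (toBaer.symm y))
  one := toBaer 1
  inv x := toBaer (toBaer.symm x)⁻¹
  mul_assoc x y z := congrArg toBaer (baerMul_assoc m hc x y z)
  one_mul x := show toBaer (baerMul m 1 (toBaer.symm x)) = x by simp [baerMul]
  mul_one x := show toBaer (baerMul m (toBaer.symm x) 1) = x by simp [baerMul]
  inv_mul_cancel x := show toBaer (baerMul m (toBaer.symm x)⁻¹ (toBaer.symm x)) = toBaer 1 by
    simp [baerMul, commutatorElement_inv_right]
  mul_comm x y := congrArg toBaer (baerMul_comm m hc hm x y)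

theorem Baer.exists_subgroup_eq_image (m : ℕ) (hc : ∀ a b : G, ⁅a, b⁆ ∈ center G)
    (hm : ∀ g : G, g ^ (2 * m) = g) (H : Subgroup G) :
    letI := Baer.commGroup m hc hm
    ∃ K : Subgroup (Baer G), (K : Set (Baer G)) = toBaer '' H := by
  let := Baer.commGroup m hc hm
  refine ⟨{ carrier := toBaer '' H
            mul_mem' := ?_
            one_mem' := ⟨1, H.one_mem, rfl⟩
            inv_mem' := ?_ }, rfl⟩
  · rintro _ _ ⟨x, hx, rfl⟩ ⟨y, hy, rfl⟩
    have hyx : ⁅y, x⁆ ∈ H := by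
      rw [commutatorElement_def]
      exact mul_mem (mul_mem (mul_mem hy hx) (inv_mem hy)) (inv_mem hx)
    exact ⟨baerMul m x y, mul_mem (mul_mem hx hy) (pow_mem hyx m), rfl⟩
  · rintro _ ⟨x, hx, rfl⟩
    exact ⟨x⁻¹, H.inv_mem hx, rfl⟩

end Baer

theorem exists_pow_two_mul_eq_self_of_odd_card {G : Type*} [Group G] [Finite G]
    (h : Odd (Nat.card G)) : ∃ m : ℕ, ∀ g : G, g ^ (2 * m) = g := by
  obtain ⟨k, hk⟩ := h
  refine ⟨k + 1, fun g => ?_⟩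
  rw [show 2 * (k + 1) = Nat.card G + 1 by omega, pow_succ, pow_card_eq_one', one_mul]

/-- Every finite nilpotent group of nilpotency class at most 2
(i.e. `γ₃(G) = 1`, equivalently `lowerCentralSeries G 2 = ⊥` in Mathlib's indexing)
and of odd order satisfies the Ingleton inequality. -/
theorem classTwo_oddOrder_ingleton
    (G : Type*) [Group G] [Finite G]
    (hclass : (⊤ : Subgroup G).lowerCentralSeries 2 = ⊥)
    (hodd : Odd (Nat.card G))
    (H₁ H₂ H₃ H₄ : Subgroup G) :
    Nat.card (H₁ ⊓ H₂ : Subgroup G) * Nat.card (H₁ ⊓ H₃ : Subgroup G) *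
      Nat.card (H₁ ⊓ H₄ : Subgroup G) * Nat.card (H₂ ⊓ H₃ : Subgroup G) *
      Nat.card (H₂ ⊓ H₄ : Subgroup G) ≤
    Nat.card H₁ * Nat.card H₂ * Nat.card (H₃ ⊓ H₄ : Subgroup G) *
      Nat.card (H₁ ⊓ H₂ ⊓ H₃ : Subgroup G) * Nat.card (H₁ ⊓ H₂ ⊓ H₄ : Subgroup G) := by
  have hc (a b : G) : ⁅a, b⁆ ∈ center G :=
    commutator_top_right_eq_bot_iff_le_center.mp hclass
      (commutator_mem_commutator (mem_top a) (mem_top b))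
  obtain ⟨m, hm⟩ := exists_pow_two_mul_eq_self_of_odd_card hodd
  let := Baer.commGroup m hc hm
  choose K hK using Baer.exists_subgroup_eq_image m hc hm
  exact IngletonInequality.of_image toBaer.injective hK (ingletonInequality_of_commGroup _ _ _ _)
end

section
/- Every finite nilpotent group G of nilpotency class at most 2 and of odd order is Abelian representable: for every n and every family of subgroups G₁, …, Gₙ of G, there exist a finite abelian (additive) group A with |A| = |G| and subgroups A₁, …, Aₙ of A such that for every nonempty S ⊆ {1, …, n}, [G : ⋂_{i∈S} G_i] = [A : ⋂_{i∈S} A_i]. -/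
/-!
Baer's trick. If commutators are central and `g ↦ g ^ m` is a square root on `G`
(for `|G| = 2k + 1` take `m = k + 1`), then `a + b := a * b * ⁅b, a⁆ ^ m` is an abelian group
law on the underlying set of `G`, with identity `1` and negation `g ↦ g⁻¹`. Every subgroup of
`G` is closed under it, so it is an additive subgroup with the same carrier, hence of the same
index, and intersections are the same sets in both structures.
-/

open scoped commutatorElement

theorem commute_commutatorElement_of_lowerCentralSeries_two_eq_bot {G : Type*} [Group G]
    (h : (⊤ : Subgroup G).lowerCentralSeries 2 = ⊥) (a b g : G) : Commute ⁅a, b⁆ g := by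
  have hle : commutator G ≤ Subgroup.centralizer Set.univ :=
    Subgroup.commutator_eq_bot_iff_le_centralizer.mp h
  exact (Subgroup.mem_centralizer_iff.mp
    (hle (Subgroup.commutator_mem_commutator (Subgroup.mem_top a) (Subgroup.mem_top b)))
    g (Set.mem_univ g)).symm

section Baer

variable {G : Type*} [Group G]

def baerAdd (m : ℕ) (a b : G) : G := a * b * ⁅b, a⁆ ^ m

variable (hc : ∀ a b g : G, Commute ⁅a, b⁆ g)
include hc

theorem commutatorElement_mul_left_of_central (a b c : G) : ⁅a * b, c⁆ = ⁅a, c⁆ * ⁅b, c⁆ := by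
  rw [commutatorElement_mul_left_eq_conj_mul, ← (hc b c a).eq, mul_inv_cancel_right,
    (hc b c _).eq]

theorem commutatorElement_mul_right_of_central (a b c : G) : ⁅a, b * c⁆ = ⁅a, b⁆ * ⁅a, c⁆ := by
  rw [commutatorElement_mul_right_eq_mul_conj, mul_assoc _ b, ← (hc a c b).eq,
    mul_assoc, mul_inv_cancel_right]

variable {m : ℕ}

theorem baerAdd_baerAdd_left (a b c : G) :
    baerAdd m (baerAdd m a b) c = a * b * c * (⁅b, a⁆ * ⁅c, a⁆ * ⁅c, b⁆) ^ m := by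
  have hcomm : ⁅c, baerAdd m a b⁆ = ⁅c, a⁆ * ⁅c, b⁆ := by
    rw [baerAdd, commutatorElement_mul_right_of_central hc,
      commutatorElement_eq_one_iff_commute.mpr ((hc b a c).pow_left m).symm, mul_one,
      commutatorElement_mul_right_of_central hc]
  rw [baerAdd, hcomm, baerAdd, (hc c b (⁅b, a⁆ * ⁅c, a⁆)).symm.mul_pow, (hc b a ⁅c, a⁆).mul_pow,
    (hc c a ⁅c, b⁆).mul_pow, mul_assoc (a * b) _ c, ((hc b a c).pow_left m).eq]
  group

theorem baerAdd_baerAdd_right (a b c : G) :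
    baerAdd m a (baerAdd m b c) = a * b * c * (⁅b, a⁆ * ⁅c, a⁆ * ⁅c, b⁆) ^ m := by
  have hcomm : ⁅baerAdd m b c, a⁆ = ⁅b, a⁆ * ⁅c, a⁆ := by
    rw [baerAdd, commutatorElement_mul_left_of_central hc,
      commutatorElement_eq_one_iff_commute.mpr ((hc c b a).pow_left m), mul_one,
      commutatorElement_mul_left_of_central hc]
  rw [baerAdd, hcomm, baerAdd, (hc c b (⁅b, a⁆ * ⁅c, a⁆)).symm.mul_pow,
    ← ((hc c b ((⁅b, a⁆ * ⁅c, a⁆) ^ m)).pow_left m).eq]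
  group

theorem baerAdd_comm (hm : ∀ g : G, g ^ (2 * m) = g) (a b : G) :
    baerAdd m a b = baerAdd m b a := by
  have hhalf : ⁅a, b⁆ * ⁅b, a⁆ ^ m = ⁅a, b⁆ ^ m := by
    rw [← commutatorElement_inv a b, inv_pow]
    nth_rewrite 1 [← hm ⁅a, b⁆]
    rw [two_mul, pow_add, mul_inv_cancel_right]
  rw [baerAdd, baerAdd, show a * b = ⁅a, b⁆ * (b * a) by group, (hc a b _).eq, mul_assoc (b * a),
    hhalf]


variable (hm : ∀ g : G, g ^ (2 * m) = g)

abbrev baerAddCommGroup : AddCommGroup G :=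
  letI : Zero G := ⟨1⟩
  letI : Add G := ⟨baerAdd m⟩
  letI : Neg G := ⟨fun a => a⁻¹⟩
  { nsmul := nsmulRec
    zsmul := zsmulRec
    add_assoc := fun a b c =>
      (baerAdd_baerAdd_left hc a b c).trans (baerAdd_baerAdd_right hc a b c).symm
    zero_add := fun a => show 1 * a * ⁅a, 1⁆ ^ m = a by simp
    add_zero := fun a => show a * 1 * ⁅1, a⁆ ^ m = a by simp
    neg_add_cancel := fun a => show a⁻¹ * a * ⁅a, a⁻¹⁆ ^ m = 1 by simp [commutatorElement_def]
    add_comm := baerAdd_comm hc hm }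

def baerAddSubgroup (H : Subgroup G) :
    letI := baerAddCommGroup hc hm
    AddSubgroup G :=
  letI := baerAddCommGroup hc hm
  { carrier := H
    zero_mem' := H.one_mem
    add_mem' := fun {a b} ha hb =>
      have hba : ⁅b, a⁆ ∈ H := mul_mem (mul_mem (mul_mem hb ha) (inv_mem hb)) (inv_mem ha)
      mul_mem (mul_mem ha hb) (pow_mem hba m)
    neg_mem' := H.inv_mem }

@[simp]
theorem mem_baerAddSubgroup {H : Subgroup G} {g : G} :
    letI := baerAddCommGroup hc hm
    g ∈ baerAddSubgroup hc hm H ↔ g ∈ H := Iff.rfl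

theorem index_baerAddSubgroup [Finite G] (H : Subgroup G) :
    letI := baerAddCommGroup hc hm
    (baerAddSubgroup hc hm H).index = H.index := by
  let := baerAddCommGroup hc hm
  have hcard : Nat.card (baerAddSubgroup hc hm H) = Nat.card H := rfl
  have hpos : 0 < Nat.card H := Nat.card_pos
  refine Nat.eq_of_mul_eq_mul_left hpos ?_
  rw [Subgroup.card_mul_index, ← hcard, AddSubgroup.card_mul_index]

end Baer

/-- Every finite nilpotent group of nilpotency class at most 2
(`lowerCentralSeries G 2 = ⊥`, i.e. `γ₃(G) = 1`) and of odd order is Abelian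
representable: for every `n` and family of subgroups `G₁, …, Gₙ` of `G`, there are a
finite abelian group `A` with `|A| = |G|` and subgroups `A₁, …, Aₙ` of `A` with
`[G : ⋂_{i∈S} Gᵢ] = [A : ⋂_{i∈S} Aᵢ]` for every nonempty `S ⊆ {1,…,n}`. -/
theorem classTwo_oddOrder_abelianRepresentable
    (G : Type*) [Group G] [Finite G]
    (hclass : (⊤ : Subgroup G).lowerCentralSeries 2 = ⊥)
    (hodd : Odd (Nat.card G))
    (n : ℕ) (Gs : Fin n → Subgroup G) :
    ∃ (A : Type) (_ : AddCommGroup A) (_ : Fintype A),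
      Nat.card A = Nat.card G ∧
      ∃ As : Fin n → AddSubgroup A,
        ∀ S : Finset (Fin n), S.Nonempty →
          (⨅ i ∈ S, Gs i).index = (⨅ i ∈ S, As i).index := by
  have hc := commute_commutatorElement_of_lowerCentralSeries_two_eq_bot hclass
  obtain ⟨k, hk⟩ := hodd
  have hm : ∀ g : G, g ^ (2 * (k + 1)) = g := fun g => by
    rw [show 2 * (k + 1) = Nat.card G + 1 by omega, pow_succ, pow_card_eq_one', one_mul]
  let := baerAddCommGroup hc hm
  let e : Shrink.{0} G ≃+ G := Shrink.addEquiv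
  refine ⟨Shrink.{0} G, inferInstance, Fintype.ofFinite _, Nat.card_congr e.toEquiv,
    fun i => (baerAddSubgroup hc hm (Gs i)).comap e.toAddMonoidHom, fun S _ => ?_⟩
  rw [← index_baerAddSubgroup hc hm,
    ← AddSubgroup.index_comap_of_surjective _ (f := e.toAddMonoidHom) e.surjective]
  congr 1
  ext
  simp
end

section
/- Let G be a finite group of odd order and nilpotency class at most 2. Define a binary operation on G by x ⊕ y := x·y·[y,x]^{(m+1)/2}, where [y,x] = y⁻¹x⁻¹yx is the group commutator and m is the (odd) order of the element [y,x]. Then ⊕ is commutative and associative, the group identity 1 is an identity for ⊕, and the group inverse x⁻¹ is an inverse of x for ⊕; hence (G, ⊕) is an abelian group on the same underlying set as G. -/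
/-!
Commutators in a group of class at most 2 are central, so `⁅·, ·⁆` is bilinear and
`x ⊕ₖ y := x * y * ⁅y, x⁆ ^ k` is associative, with identity `1` and inverses `x⁻¹`, for every `k`:
both bracketings of `x ⊕ₖ y ⊕ₖ z` equal `x * y * z` times `(⁅y, x⁆ * ⁅z, x⁆ * ⁅z, y⁆) ^ k`.
Commutativity holds as soon as `z ↦ z ^ k` is a square root, and in a group of odd order `n`
this is the case for `k = (n + 1) / 2`. The Lazard addition is `⊕ₖ` for this `k`, because
`y⁻¹ * x⁻¹ * y * x = ⁅y, x⁆` in class 2 and `z ^ ((m + 1) / 2) = z ^ ((n + 1) / 2)` when `m ∣ n`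
with odd quotient.
-/

/-- The class-2 Lazard addition `x ⊕ y := x·y·[y,x]^{(m+1)/2}`, where
`[y,x] = y⁻¹x⁻¹yx` is the group commutator and `m` is the order of `[y,x]`. -/
noncomputable def lazardAdd {G : Type*} [Group G] (x y : G) : G :=
  x * y * (y⁻¹ * x⁻¹ * y * x) ^ ((orderOf (y⁻¹ * x⁻¹ * y * x) + 1) / 2)

open Subgroup
open scoped commutatorElement

section ClassTwo

variable {G : Type*} [Group G]

theorem commute_commutatorElement_of_le_center (hG : commutator G ≤ center G) (a b g : G) :
    Commute ⁅a, b⁆ g :=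
  (mem_center_iff.mp (hG (commutator_mem_commutator (mem_top a) (mem_top b))) g).symm

theorem commutatorElement_mul_left_of_le_center (hG : commutator G ≤ center G) (a b c : G) :
    ⁅a * b, c⁆ = ⁅a, c⁆ * ⁅b, c⁆ := by
  rw [commutatorElement_mul_left_eq_conj_mul,
    ← (commute_commutatorElement_of_le_center hG b c a).eq, mul_inv_cancel_right,
    (commute_commutatorElement_of_le_center hG b c _).eq]

theorem commutatorElement_mul_right_of_le_center (hG : commutator G ≤ center G) (a b c : G) :
    ⁅a, b * c⁆ = ⁅a, b⁆ * ⁅a, c⁆ := by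
  rw [commutatorElement_mul_right_eq_mul_conj, mul_assoc _ b,
    ← (commute_commutatorElement_of_le_center hG a c b).eq, ← mul_assoc, mul_inv_cancel_right]

theorem inv_mul_inv_mul_mul_eq_commutatorElement (hG : commutator G ≤ center G) (x y : G) :
    y⁻¹ * x⁻¹ * y * x = ⁅y, x⁆ := by
  have hconj : ⁅y, x⁆ = y * x * ⁅y⁻¹, x⁻¹⁆ * (y * x)⁻¹ := by
    simp only [commutatorElement_def]; group
  rw [hconj, (commute_commutatorElement_of_le_center hG y⁻¹ x⁻¹ _).symm.eq, mul_inv_cancel_right,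
    commutatorElement_def, inv_inv, inv_inv]

end ClassTwo

section TwistedProduct

variable {G : Type*} [Group G]

def mulCommutatorPow (k : ℕ) (x y : G) : G := x * y * ⁅y, x⁆ ^ k

theorem mulCommutatorPow_one_right (k : ℕ) (x : G) : mulCommutatorPow k x 1 = x := by
  simp [mulCommutatorPow]

theorem mulCommutatorPow_one_left (k : ℕ) (x : G) : mulCommutatorPow k 1 x = x := by
  simp [mulCommutatorPow]

theorem mulCommutatorPow_inv_right (k : ℕ) (x : G) : mulCommutatorPow k x x⁻¹ = 1 := by
  simp [mulCommutatorPow, commutatorElement_def]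

theorem mulCommutatorPow_comm (hG : commutator G ≤ center G) {k : ℕ}
    (hk : ∀ z : G, (z ^ k) ^ 2 = z) (x y : G) :
    mulCommutatorPow k x y = mulCommutatorPow k y x := by
  have hyx : y * x = x * y * ⁅y, x⁆ := by
    rw [← (commute_commutatorElement_of_le_center hG y x (x * y)).eq, commutatorElement_def]; group
  calc x * y * ⁅y, x⁆ ^ k = x * y * (⁅y, x⁆ ^ k) ^ 2 * (⁅y, x⁆ ^ k)⁻¹ := by group
    _ = y * x * ⁅x, y⁆ ^ k := by rw [hk, ← hyx, ← inv_pow, commutatorElement_inv]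

theorem mulCommutatorPow_assoc (hG : commutator G ≤ center G) (k : ℕ) (x y z : G) :
    mulCommutatorPow k (mulCommutatorPow k x y) z =
      mulCommutatorPow k x (mulCommutatorPow k y z) := by
  have hcomm := commute_commutatorElement_of_le_center hG
  have hcentral_right (a b c d : G) : ⁅a, b * ⁅c, d⁆ ^ k⁆ = ⁅a, b⁆ := by
    rw [commutatorElement_mul_right_of_le_center hG, commutatorElement_eq_one_iff_commute.mpr
      ((hcomm c d a).symm.pow_right k), mul_one]
  have hcentral_left (a b c d : G) : ⁅b * ⁅c, d⁆ ^ k, a⁆ = ⁅b, a⁆ := by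
    rw [commutatorElement_mul_left_of_le_center hG, commutatorElement_eq_one_iff_commute.mpr
      ((hcomm c d a).pow_left k), mul_one]
  simp only [mulCommutatorPow, hcentral_left, hcentral_right,
    commutatorElement_mul_left_of_le_center hG, commutatorElement_mul_right_of_le_center hG,
    (hcomm _ _ _).mul_pow, mul_assoc]
  rw [((hcomm y x z).pow_left k).left_comm, ← mul_assoc (⁅y, x⁆ ^ k),
    (((hcomm y x _).pow_left k).mul_left ((hcomm z x _).pow_left k)).eq]

end TwistedProduct

theorem pow_orderOf_add_one_div_two_eq {M : Type*} [Monoid M] {z : M} {n : ℕ} (hn : Odd n)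
    (hz : orderOf z ∣ n) : z ^ ((orderOf z + 1) / 2) = z ^ ((n + 1) / 2) := by
  obtain ⟨t, rfl⟩ := hz
  obtain ⟨s, rfl⟩ := (Nat.odd_mul.mp hn).2
  have hexp : orderOf z * (2 * s + 1) + 1 = 2 * (orderOf z * s) + (orderOf z + 1) := by ring
  rw [hexp, Nat.mul_add_div two_pos, pow_add, pow_mul, pow_orderOf_eq_one, one_pow, one_mul]

theorem pow_card_add_one_div_two_sq {G : Type*} [Group G] (hodd : Odd (Nat.card G)) (z : G) :
    (z ^ ((Nat.card G + 1) / 2)) ^ 2 = z := by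
  rw [← pow_mul, Nat.div_mul_cancel hodd.add_one.two_dvd, pow_succ, pow_card_eq_one', one_mul]

theorem lazardAdd_eq_mulCommutatorPow {G : Type*} [Group G] (hodd : Odd (Nat.card G))
    (hG : commutator G ≤ center G) :
    (lazardAdd : G → G → G) = mulCommutatorPow ((Nat.card G + 1) / 2) := by
  ext x y
  rw [lazardAdd, mulCommutatorPow, inv_mul_inv_mul_mul_eq_commutatorElement hG,
    pow_orderOf_add_one_div_two_eq hodd (orderOf_dvd_natCard _)]

theorem lazardAdd_abelianGroup_general
    (G : Type*) [Group G]
    (hodd : Odd (Nat.card G))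
    (hclass : (⊤ : Subgroup G).lowerCentralSeries 2 = ⊥) :
    (∀ x y : G, lazardAdd x y = lazardAdd y x) ∧
    (∀ x y z : G, lazardAdd (lazardAdd x y) z = lazardAdd x (lazardAdd y z)) ∧
    (∀ x : G, lazardAdd x 1 = x) ∧
    (∀ x : G, lazardAdd 1 x = x) ∧
    (∀ x : G, lazardAdd x x⁻¹ = 1) := by
  have hG : commutator G ≤ center G := commutator_top_right_eq_bot_iff_le_center.mp hclass
  rw [lazardAdd_eq_mulCommutatorPow hodd hG]
  exact ⟨mulCommutatorPow_comm hG (pow_card_add_one_div_two_sq hodd), mulCommutatorPow_assoc hG _,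
    mulCommutatorPow_one_right _, mulCommutatorPow_one_left _, mulCommutatorPow_inv_right _⟩

/-- In a finite group `G` of odd order and nilpotency class at most 2
(`γ₃(G) = 1`, i.e. `lowerCentralSeries G 2 = ⊥`), the operation
`x ⊕ y := x·y·[y,x]^{(m+1)/2}` is commutative and associative, has the group
identity `1` as identity, and the group inverse `x⁻¹` as the inverse of `x`;
hence `(G, ⊕)` is an abelian group on the same underlying set as `G`. -/
theorem lazardAdd_abelianGroup
    (G : Type*) [Group G] [Finite G]
    (hodd : Odd (Nat.card G))
    (hclass : (⊤ : Subgroup G).lowerCentralSeries 2 = ⊥) :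
    (∀ x y : G, lazardAdd x y = lazardAdd y x) ∧
    (∀ x y z : G, lazardAdd (lazardAdd x y) z = lazardAdd x (lazardAdd y z)) ∧
    (∀ x : G, lazardAdd x 1 = x) ∧
    (∀ x : G, lazardAdd 1 x = x) ∧
    (∀ x : G, lazardAdd x x⁻¹ = 1) :=
  lazardAdd_abelianGroup_general G hodd hclass
end

section
/- Let G be a finite nilpotent group. If for every prime p dividing |G| every Sylow p-subgroup of G is Abelian representable, then G is Abelian representable: for every n and every family of subgroups G₁, …, Gₙ of G there exist a finite abelian group A and subgroups A₁, …, Aₙ such that [G : ⋂_{i∈S} G_i] = [A : ⋂_{i∈S} A_i] for every nonempty S ⊆ {1, …, n}. -/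
/-!
A finite nilpotent group is the direct product of its Sylow subgroups, whose orders are pairwise
coprime. In a product of finite groups of pairwise coprime orders every subgroup is the product
of its projections: by the Chinese remainder theorem, a suitable power of an element keeps one
coordinate and kills all the others. Hence intersections and indices of subgroups are computed
factorwise, and representing each factor by an abelian group and taking the product of these
representations represents the whole group.
-/

/-- A group `G` is Abelian representable if for every `n` and every family of
subgroups `G₁, …, Gₙ` of `G` there are a finite abelian (additive) group `A` and
subgroups `A₁, …, Aₙ` of `A` such that `[G : ⋂_{i∈S} Gᵢ] = [A : ⋂_{i∈S} Aᵢ]` for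
every nonempty `S ⊆ {1,…,n}`. -/
def AbelianRepresentable (G : Type*) [Group G] : Prop :=
  ∀ (n : ℕ) (Gs : Fin n → Subgroup G),
    ∃ (A : Type) (_ : AddCommGroup A) (_ : Fintype A),
      ∃ As : Fin n → AddSubgroup A,
        ∀ S : Finset (Fin n), S.Nonempty →
          (⨅ i ∈ S, Gs i).index = (⨅ i ∈ S, As i).index

open Function Set

theorem AbelianRepresentable.of_mulEquiv {G H : Type*} [Group G] [Group H] (e : G ≃* H)
    (hG : AbelianRepresentable G) : AbelianRepresentable H := by
  intro n Hs
  obtain ⟨A, instA, finA, As, hA⟩ := hG n fun i => (Hs i).comap e.toMonoidHom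
  refine ⟨A, instA, finA, As, fun S hS => ?_⟩
  simp only [← hA S hS, ← Subgroup.comap_iInf,
    Subgroup.index_comap_of_surjective _ (f := e.toMonoidHom) e.surjective]

namespace Subgroup

variable {η : Type*} {K : η → Type*} [∀ i, Group (K i)]

@[to_additive]
theorem iInf_pi_univ {ι : Sort*} (H : ι → ∀ i, Subgroup (K i)) :
    ⨅ j, pi univ (H j) = pi univ fun i => ⨅ j, H j i := by
  ext x
  simp only [mem_iInf, mem_pi, mem_univ, forall_const]
  exact forall_comm

@[to_additive]
theorem index_pi' [Fintype η] (H : ∀ i, Subgroup (K i)) :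
    (pi univ H).index = ∏ i, (H i).index := by
  simp_rw [index, ← Nat.card_pi]
  refine Nat.card_congr
    ((Quotient.congrRight fun x y => ?_).trans (Setoid.piQuotientEquiv _).symm)
  rw [QuotientGroup.leftRel_pi]

theorem mulSingle_mem_zpowers_of_coprime [Fintype η] [DecidableEq η]
    (hco : Pairwise (Nat.Coprime on fun i => Nat.card (K i))) (y : ∀ i, K i) (i : η) :
    Pi.mulSingle i (y i) ∈ zpowers y := by
  obtain ⟨k, hk_one, hk_zero⟩ := Nat.chineseRemainder
    (Nat.Coprime.prod_right (t := Finset.univ.erase i) (s := fun j => Nat.card (K j))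
      fun j hj => hco (Finset.ne_of_mem_erase hj).symm) 1 0
  suffices y ^ k = Pi.mulSingle i (y i) from this ▸ npow_mem_zpowers y k
  funext j
  rw [Pi.pow_apply]
  rcases eq_or_ne j i with rfl | hj
  · have hk : k ≡ 1 [MOD orderOf (y j)] := hk_one.of_dvd (_root_.orderOf_dvd_natCard (y j))
    rw [Pi.mulSingle_eq_same, pow_eq_pow_iff_modEq.mpr hk, pow_one]
  · have hk : orderOf (y j) ∣ k := (_root_.orderOf_dvd_natCard (y j)).trans <|
      (Finset.dvd_prod_of_mem _ (Finset.mem_erase.mpr ⟨hj, Finset.mem_univ j⟩)).trans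
        (Nat.modEq_zero_iff_dvd.mp hk_zero)
    rw [Pi.mulSingle_eq_of_ne hj, orderOf_dvd_iff_pow_eq_one.mp hk]

theorem eq_pi_map_eval_of_coprime [Finite η]
    (hco : Pairwise (Nat.Coprime on fun i => Nat.card (K i))) (Γ : Subgroup (∀ i, K i)) :
    Γ = pi univ fun i => Γ.map (Pi.evalMonoidHom K i) := by
  classical
  have := Fintype.ofFinite η
  refine le_antisymm (fun x hx i _ => mem_map_of_mem _ hx) fun x hx =>
    pi_mem_of_mulSingle_mem x fun i => ?_
  obtain ⟨y, hy, hyx⟩ := hx i (mem_univ i)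
  rw [← hyx]
  exact zpowers_le_of_mem hy (mulSingle_mem_zpowers_of_coprime hco y i)

end Subgroup

theorem AbelianRepresentable.pi {η : Type} [Finite η] {K : η → Type*} [∀ i, Group (K i)]
    (hco : Pairwise (Nat.Coprime on fun i => Nat.card (K i)))
    (hK : ∀ i, AbelianRepresentable (K i)) : AbelianRepresentable (∀ i, K i) := by
  classical
  have := Fintype.ofFinite η
  intro n Gs
  choose A _ _ As hA using fun i => hK i n fun j => (Gs j).map (Pi.evalMonoidHom K i)
  refine ⟨∀ i, A i, inferInstance, inferInstance, fun j => AddSubgroup.pi univ fun i => As i j,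
    fun S hS => ?_⟩
  calc (⨅ j ∈ S, Gs j).index
      = (⨅ j ∈ S, Subgroup.pi univ fun i => (Gs j).map (Pi.evalMonoidHom K i)).index := by
        simp only [← Subgroup.eq_pi_map_eval_of_coprime hco]
    _ = ∏ i, (⨅ j ∈ S, (Gs j).map (Pi.evalMonoidHom K i)).index := by
        simp only [Subgroup.iInf_pi_univ, Subgroup.index_pi']
    _ = ∏ i, (⨅ j ∈ S, As i j).index := Finset.prod_congr rfl fun i _ => hA i S hS
    _ = (⨅ j ∈ S, AddSubgroup.pi univ fun i => As i j).index := by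
        simp only [AddSubgroup.iInf_pi_univ, AddSubgroup.index_pi']

noncomputable def Sylow.piMulEquivOfNormal {G : Type*} [Group G] {p : ℕ} [Fact p.Prime]
    [Finite (Sylow p G)] (P : Sylow p G) [(P : Subgroup G).Normal] :
    (∀ Q : Sylow p G, Q) ≃* P :=
  letI := Sylow.unique_of_normal P ‹_›
  (MulEquiv.piUnique _).trans (MulEquiv.subgroupCongr (congrArg _ (Unique.default_eq P)))

/-- If every Sylow `p`-subgroup (for every prime `p` dividing `|G|`)
of a finite nilpotent group `G` is Abelian representable, then `G` is Abelian
representable. -/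
theorem nilpotent_abelianRepresentable_of_sylow
    (G : Type*) [Group G] [Finite G] [Group.IsNilpotent G]
    (hSyl : ∀ p : ℕ, p.Prime → p ∣ Nat.card G →
      ∀ P : Sylow p G, AbelianRepresentable (P : Subgroup G)) :
    AbelianRepresentable G := by
  have (p : (Nat.card G).primeFactors) : Fact (p : ℕ).Prime :=
    ⟨Nat.prime_of_mem_primeFactors p.2⟩
  refine (AbelianRepresentable.pi (K := fun p : (Nat.card G).primeFactors => ∀ P : Sylow p G, P)
    ?_ fun p => ?_).of_mulEquiv (Sylow.directProductOfNormal fun _ => inferInstance)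
  · intro p q hpq
    simp only [onFun, Nat.card_congr (Sylow.piMulEquivOfNormal default).toEquiv]
    exact IsPGroup.coprime_card_of_ne p q (Subtype.coe_injective.ne hpq) _ _
      (default : Sylow p G).isPGroup' (default : Sylow q G).isPGroup'
  · exact (hSyl p (Nat.prime_of_mem_primeFactors p.2) (Nat.dvd_of_mem_primeFactors p.2)
      default).of_mulEquiv (Sylow.piMulEquivOfNormal default).symm
end
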